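/- The word x = a₁ b a₂ b² a₃ b³ ⋯ a_{n-1} b^{n-1} aₙ has exactly two distinct factorizations into elements of Lₙ = {a₁, aₙ} ∪ { bⁱ a_{i+1} : 1 ≤ i < n } ∪ { aᵢ bⁱ : 1 ≤ i < n }, namely (a₁)(b a₂)(b² a₃)⋯(b^{n-1} aₙ) and (a₁ b)(a₂ b²)⋯(a_{n-1} b^{n-1})(aₙ). -/

import Mathlib

/-!
Reading `x` from the left, at most one word of `Lₙ` can be split off at each step, except at
the very beginning, where `a₁` and `a₁ b` both fit. After `a₁ b` the rest `a₂ b² a₃ ⋯` begins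
with a block `a_{j+1} b^{j+1}`, and the only word of `Lₙ` fitting there is `a_{j+1} b^{j+1}`
(or `aₙ` at the end); after `a₁` the rest `b a₂ b² a₃ ⋯` begins with `b^j a_{j+1}`, and only
`b^j a_{j+1}` fits. Hence each of the two initial choices determines the whole factorization.
-/

open Computability
open Fin.NatCast

/-- `l` is a factorization of `x` into elements of `L`. -/
def IsFactorization {α : Type*} (L : Language α) (x : List α) (l : List (List α)) : Prop :=
  (∀ w ∈ l, w ∈ L) ∧ l.flatten = x

/-- The alphabet `{b, a₁, …, aₙ}` is encoded as `Option (Fin n)`, with `none` playing the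
role of `b` and `some (i-1)` playing the role of `aᵢ`.  `Lc n` is the language
`{a₁, aₙ} ∪ { bⁱ a_{i+1} : 1 ≤ i < n } ∪ { aᵢ bⁱ : 1 ≤ i < n }`. -/
def Lc (n : ℕ) [NeZero n] : Language (Option (Fin n)) := show Set (List (Option (Fin n))) from
  {[some ((0 : ℕ) : Fin n)], [some ((n - 1 : ℕ) : Fin n)]} ∪
  {w | ∃ i, 1 ≤ i ∧ i < n ∧ w = List.replicate i none ++ [some ((i : ℕ) : Fin n)]} ∪
  {w | ∃ i, 1 ≤ i ∧ i < n ∧ w = some ((i - 1 : ℕ) : Fin n) :: List.replicate i none}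

/-- The word `a₁ b a₂ b² a₃ b³ ⋯ a_{n-1} b^{n-1} aₙ`. -/
def xc (n : ℕ) [NeZero n] : List (Option (Fin n)) :=
  ((List.range (n - 1)).map
    (fun j => some ((j : ℕ) : Fin n) :: List.replicate (j + 1) none)).flatten ++
    [some ((n - 1 : ℕ) : Fin n)]

/-- The factorization `(a₁)(b a₂)(b² a₃)⋯(b^{n-1} aₙ)`. -/
def fc₁ (n : ℕ) [NeZero n] : List (List (Option (Fin n))) :=
  [some ((0 : ℕ) : Fin n)] ::
    (List.range (n - 1)).map
      (fun j => List.replicate (j + 1) none ++ [some ((j + 1 : ℕ) : Fin n)])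

/-- The factorization `(a₁ b)(a₂ b²)⋯(a_{n-1} b^{n-1})(aₙ)`. -/
def fc₂ (n : ℕ) [NeZero n] : List (List (Option (Fin n))) :=
  ((List.range (n - 1)).map
    (fun j => some ((j : ℕ) : Fin n) :: List.replicate (j + 1) none)) ++
    [[some ((n - 1 : ℕ) : Fin n)]]

section Factorization

variable {α : Type*} {L : Language α} {x w : List α} {l : List (List α)}

@[simp]
theorem isFactorization_nil_iff : IsFactorization L x [] ↔ x = [] := by
  simp [IsFactorization, eq_comm]

theorem isFactorization_cons_iff :
    IsFactorization L x (w :: l) ↔ w ∈ L ∧ ∃ y, w ++ y = x ∧ IsFactorization L y l := by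
  simp only [IsFactorization, List.mem_cons, forall_eq_or_imp, List.flatten_cons]
  aesop

theorem isFactorization_empty_word_iff (hL : [] ∉ L) : IsFactorization L [] l ↔ l = [] := by
  refine ⟨fun ⟨hmem, hl⟩ => ?_, fun h => by simp [h]⟩
  rw [List.flatten_eq_nil_iff] at hl
  exact List.eq_nil_iff_forall_not_mem.2 fun w hw => hL (hl w hw ▸ hmem w hw)

theorem isFactorization_append_iff_of_unique_head {w₀ y : List α} {G : List (List α)}
    (hw₀ : w₀ ∈ L) (hne : w₀ ≠ []) (hhead : ∀ w ∈ L, ∀ z, w ++ z = w₀ ++ y → w = w₀ ∧ z = y)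
    (hy : ∀ l, IsFactorization L y l ↔ l = G) :
    IsFactorization L (w₀ ++ y) l ↔ l = w₀ :: G := by
  cases l with
  | nil => simp [hne]
  | cons w l =>
    rw [isFactorization_cons_iff, List.cons.injEq, ← hy]
    constructor
    · rintro ⟨hw, z, hz, hzl⟩
      obtain ⟨rfl, rfl⟩ := hhead w hw z hz
      exact ⟨rfl, hzl⟩
    · rintro ⟨rfl, hl⟩
      exact ⟨hw₀, y, rfl, hl⟩

end Factorization

theorem List.replicate_append_cons_inj {α : Type*} {c a b : α} {i j : ℕ} {u v : List α}
    (ha : a ≠ c) (hb : b ≠ c) (h : replicate i c ++ a :: u = replicate j c ++ b :: v) :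
    i = j ∧ a = b ∧ u = v := by
  induction i generalizing j with
  | zero =>
    cases j with
    | zero => simpa using h
    | succ j => exact absurd (List.cons.inj h).1 ha
  | succ i ih =>
    cases j with
    | zero => exact absurd (List.cons.inj h).1.symm hb
    | succ j =>
      obtain ⟨rfl, rfl, rfl⟩ := ih (List.cons.inj h).2
      exact ⟨rfl, rfl, rfl⟩

theorem Fin.natCast_inj_of_lt {n i j : ℕ} [NeZero n] (hi : i < n) (hj : j < n) :
    (i : Fin n) = j ↔ i = j := by
  rw [Fin.ext_iff, Fin.val_cast_of_lt hi, Fin.val_cast_of_lt hj]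

section Lc

open List

variable {n : ℕ} [NeZero n]

theorem mem_Lc {w : List (Option (Fin n))} :
    w ∈ Lc n ↔ w = [some ((0 : ℕ) : Fin n)] ∨ w = [some ((n - 1 : ℕ) : Fin n)] ∨
      (∃ i, 1 ≤ i ∧ i < n ∧ w = replicate i none ++ [some (i : Fin n)]) ∨
      ∃ i, 1 ≤ i ∧ i < n ∧ w = some ((i - 1 : ℕ) : Fin n) :: replicate i none := by
  change w ∈ (_ ∪ _ ∪ _ : Set _) ↔ _
  simp only [Set.mem_union, Set.mem_insert_iff, Set.mem_singleton_iff, Set.mem_ofPred_eq, or_assoc]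

theorem nil_not_mem_Lc : [] ∉ Lc n := by
  simp [mem_Lc]

theorem eq_of_mem_Lc_of_append_eq_replicate {j : ℕ} (hj : 1 ≤ j) {w y z : List (Option (Fin n))}
    (hw : w ∈ Lc n) (h : w ++ y = replicate j none ++ some (j : Fin n) :: z) :
    w = replicate j none ++ [some (j : Fin n)] ∧ y = z := by
  obtain ⟨j, rfl⟩ : ∃ j', j = j' + 1 := ⟨j - 1, by omega⟩
  rcases mem_Lc.1 hw with rfl | rfl | ⟨i, -, -, rfl⟩ | ⟨i, -, -, rfl⟩
  · simp [replicate_succ] at h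
  · simp [replicate_succ] at h
  · rw [append_assoc, singleton_append] at h
    obtain ⟨rfl, -, rfl⟩ := replicate_append_cons_inj (by simp) (by simp) h
    exact ⟨rfl, rfl⟩
  · simp [replicate_succ] at h

theorem eq_of_mem_Lc_of_append_eq_cons {k : ℕ} (hk : k + 1 < n) {w y z : List (Option (Fin n))}
    (hw : w ∈ Lc n) (h : w ++ y = some (k : Fin n) :: (replicate (k + 1) none ++ z)) :
    (w = some (k : Fin n) :: replicate (k + 1) none ∧ y = z) ∨
      (k = 0 ∧ w = [some ((0 : ℕ) : Fin n)] ∧ y = replicate 1 none ++ z) := by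
  rcases mem_Lc.1 hw with rfl | rfl | ⟨i, hi, -, rfl⟩ | ⟨i, hi, hin, rfl⟩
  · obtain ⟨hk0, rfl⟩ := cons.inj h
    obtain rfl : 0 = k := (Fin.natCast_inj_of_lt (by omega) (by omega)).1 (Option.some.inj hk0)
    exact Or.inr ⟨rfl, rfl, rfl⟩
  · have := (Fin.natCast_inj_of_lt (by omega) (by omega)).1 (Option.some.inj (cons.inj h).1)
    omega
  · obtain ⟨i, rfl⟩ : ∃ i', i = i' + 1 := ⟨i - 1, by omega⟩
    simp [replicate_succ] at h
  · obtain ⟨i, rfl⟩ : ∃ i', i = i' + 1 := ⟨i - 1, by omega⟩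
    obtain ⟨hik, h⟩ := cons.inj h
    obtain rfl : i = k := (Fin.natCast_inj_of_lt (by omega) (by omega)).1 (Option.some.inj hik)
    exact Or.inl ⟨rfl, append_cancel_left h⟩

theorem eq_of_mem_Lc_of_append_eq_last (hn : 2 ≤ n) {w y : List (Option (Fin n))}
    (hw : w ∈ Lc n) (h : w ++ y = [some ((n - 1 : ℕ) : Fin n)]) :
    w = [some ((n - 1 : ℕ) : Fin n)] ∧ y = [] := by
  rcases mem_Lc.1 hw with rfl | rfl | ⟨i, hi, -, rfl⟩ | ⟨i, hi, -, rfl⟩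
  · have := (Fin.natCast_inj_of_lt (n := n) (by omega) (by omega)).1
      (Option.some.inj (cons.inj h).1)
    omega
  · simpa using h
  · obtain ⟨i, rfl⟩ : ∃ i', i = i' + 1 := ⟨i - 1, by omega⟩
    simp [replicate_succ] at h
  · obtain ⟨i, rfl⟩ : ∃ i', i = i' + 1 := ⟨i - 1, by omega⟩
    simp [replicate_succ] at h

end Lc

section Tails

open List

variable (n : ℕ) [NeZero n]

-- Indices are 0-based as in `Lc`: `xcTail n j` is the suffix `a_{j+1} b^{j+1} ⋯ aₙ` of `xc n`,
-- `fc₂Tail n j` its factorization `(a_{j+1} b^{j+1})⋯(aₙ)`, and `fc₁Tail n j` the factorization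
-- `(b^j a_{j+1})⋯(b^{n-1} aₙ)` of `b^j` followed by it.
def xcTail (j : ℕ) : List (Option (Fin n)) :=
  ((range' j (n - 1 - j)).map
    (fun k => some ((k : ℕ) : Fin n) :: replicate (k + 1) none)).flatten ++
    [some ((n - 1 : ℕ) : Fin n)]

def fc₁Tail (j : ℕ) : List (List (Option (Fin n))) :=
  (range' j (n - j)).map fun k => replicate k none ++ [some ((k : ℕ) : Fin n)]

def fc₂Tail (j : ℕ) : List (List (Option (Fin n))) :=
  ((range' j (n - 1 - j)).map
    (fun k => some ((k : ℕ) : Fin n) :: replicate (k + 1) none)) ++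
    [[some ((n - 1 : ℕ) : Fin n)]]

variable {n}

theorem xcTail_of_lt {j : ℕ} (h : j < n - 1) :
    xcTail n j = some ((j : ℕ) : Fin n) :: (replicate (j + 1) none ++ xcTail n (j + 1)) := by
  obtain ⟨d, hd⟩ : ∃ d, n - 1 - j = d + 1 := ⟨n - 1 - j - 1, by omega⟩
  simp [xcTail, hd, show n - 1 - (j + 1) = d by omega, range'_succ]

theorem fc₁Tail_of_lt {j : ℕ} (h : j < n) :
    fc₁Tail n j = (replicate j none ++ [some ((j : ℕ) : Fin n)]) :: fc₁Tail n (j + 1) := by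
  obtain ⟨d, hd⟩ : ∃ d, n - j = d + 1 := ⟨n - j - 1, by omega⟩
  simp [fc₁Tail, hd, show n - (j + 1) = d by omega, range'_succ]

theorem fc₂Tail_of_lt {j : ℕ} (h : j < n - 1) :
    fc₂Tail n j = (some ((j : ℕ) : Fin n) :: replicate (j + 1) none) :: fc₂Tail n (j + 1) := by
  obtain ⟨d, hd⟩ : ∃ d, n - 1 - j = d + 1 := ⟨n - 1 - j - 1, by omega⟩
  simp [fc₂Tail, hd, show n - 1 - (j + 1) = d by omega, range'_succ]

theorem isFactorization_xcTail_iff {j : ℕ} (hj : 1 ≤ j) (hjn : j ≤ n - 1)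
    (l : List (List (Option (Fin n)))) :
    IsFactorization (Lc n) (xcTail n j) l ↔ l = fc₂Tail n j := by
  induction hjn using Nat.decreasingInduction generalizing l with
  | self =>
    have hlast : xcTail n (n - 1) = [some ((n - 1 : ℕ) : Fin n)] ++ [] := by simp [xcTail]
    rw [hlast, show fc₂Tail n (n - 1) = [[some ((n - 1 : ℕ) : Fin n)]] by simp [fc₂Tail]]
    refine isFactorization_append_iff_of_unique_head (mem_Lc.2 (.inr (.inl rfl))) (by simp)
      (fun w hw z hz => eq_of_mem_Lc_of_append_eq_last (by omega) hw (by simpa using hz))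
      (fun _ => isFactorization_empty_word_iff nil_not_mem_Lc)
  | of_succ k hk ih =>
    rw [xcTail_of_lt hk, fc₂Tail_of_lt hk, ← cons_append]
    refine isFactorization_append_iff_of_unique_head
      (mem_Lc.2 (.inr (.inr (.inr ⟨k + 1, by omega, by omega, rfl⟩)))) (by simp)
      (fun w hw z hz => ?_) (ih (by omega))
    rcases eq_of_mem_Lc_of_append_eq_cons (by omega) hw hz with h | ⟨rfl, -⟩
    · exact h
    · omega

theorem isFactorization_replicate_append_xcTail_iff {j : ℕ} (hj : 1 ≤ j) (hjn : j ≤ n - 1)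
    (l : List (List (Option (Fin n)))) :
    IsFactorization (Lc n) (replicate j none ++ xcTail n j) l ↔ l = fc₁Tail n j := by
  induction hjn using Nat.decreasingInduction generalizing l with
  | self =>
    have hlast : replicate (n - 1) none ++ xcTail n (n - 1) =
        (replicate (n - 1) none ++ [some ((n - 1 : ℕ) : Fin n)]) ++ [] := by simp [xcTail]
    have hend : fc₁Tail n (n - 1 + 1) = [] := by
      simp [fc₁Tail, show n - (n - 1 + 1) = 0 by omega]
    rw [hlast, fc₁Tail_of_lt (by omega), hend]
    refine isFactorization_append_iff_of_unique_head
      (mem_Lc.2 (.inr (.inr (.inl ⟨n - 1, hj, by omega, rfl⟩)))) (by simp)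
      (fun w hw z hz => eq_of_mem_Lc_of_append_eq_replicate hj hw (by simpa using hz))
      (fun _ => isFactorization_empty_word_iff nil_not_mem_Lc)
  | of_succ k hk ih =>
    have hsplit : replicate k none ++ xcTail n k =
        (replicate k none ++ [some ((k : ℕ) : Fin n)]) ++
          (replicate (k + 1) none ++ xcTail n (k + 1)) := by
      simp [xcTail_of_lt hk]
    rw [hsplit, fc₁Tail_of_lt (by omega)]
    refine isFactorization_append_iff_of_unique_head
      (mem_Lc.2 (.inr (.inr (.inl ⟨k, hj, by omega, rfl⟩)))) (by simp)
      (fun w hw z hz => eq_of_mem_Lc_of_append_eq_replicate hj hw ?_) (ih (by omega))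
    simpa using hz

end Tails

section Main

open List

variable {n : ℕ} [NeZero n]

theorem xc_eq_xcTail : xc n = xcTail n 0 := by
  simp [xc, xcTail, range_eq_range']

theorem fc₁_eq_cons_fc₁Tail : fc₁ n = [some ((0 : ℕ) : Fin n)] :: fc₁Tail n 1 := by
  simp [fc₁, fc₁Tail, range'_eq_map_range, Nat.add_comm 1]

theorem fc₂_eq_fc₂Tail : fc₂ n = fc₂Tail n 0 := by
  simp [fc₂, fc₂Tail, range_eq_range']

theorem isFactorization_xc_iff (hn : 2 ≤ n) (l : List (List (Option (Fin n)))) :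
    IsFactorization (Lc n) (xc n) l ↔ l = fc₁ n ∨ l = fc₂ n := by
  have hx : xc n = some ((0 : ℕ) : Fin n) :: (replicate 1 none ++ xcTail n 1) := by
    rw [xc_eq_xcTail, xcTail_of_lt (by omega)]
  rw [fc₁_eq_cons_fc₁Tail, fc₂_eq_fc₂Tail, fc₂Tail_of_lt (by omega)]
  cases l with
  | nil => simp [hx]
  | cons w l =>
    simp only [isFactorization_cons_iff, cons.injEq]
    constructor
    · rintro ⟨hw, y, hy, hl⟩
      rw [hx] at hy
      rcases eq_of_mem_Lc_of_append_eq_cons (by omega) hw hy with ⟨rfl, rfl⟩ | ⟨-, rfl, rfl⟩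
      · exact Or.inr ⟨rfl, (isFactorization_xcTail_iff le_rfl (by omega) l).1 hl⟩
      · exact Or.inl
          ⟨rfl, (isFactorization_replicate_append_xcTail_iff le_rfl (by omega) l).1 hl⟩
    · rintro (⟨rfl, rfl⟩ | ⟨rfl, rfl⟩)
      · exact ⟨mem_Lc.2 (.inl rfl), _, by rw [hx]; rfl,
          (isFactorization_replicate_append_xcTail_iff le_rfl (by omega) _).2 rfl⟩
      · exact ⟨mem_Lc.2 (.inr (.inr (.inr ⟨1, le_rfl, by omega, rfl⟩))), _, by rw [hx]; rfl,
          (isFactorization_xcTail_iff le_rfl (by omega) _).2 rfl⟩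

end Main

/-- For `n ≥ 2`, the word `a₁ b a₂ b² ⋯ a_{n-1} b^{n-1} aₙ` has exactly two distinct
factorizations into elements of `Lₙ`, namely `(a₁)(b a₂)(b² a₃)⋯(b^{n-1} aₙ)` and
`(a₁ b)(a₂ b²)⋯(a_{n-1} b^{n-1})(aₙ)`. -/
theorem stmt5 (n : ℕ) [NeZero n] (hn : 2 ≤ n) :
    (∀ l, IsFactorization (Lc n) (xc n) l ↔ l = fc₁ n ∨ l = fc₂ n) ∧ fc₁ n ≠ fc₂ n := by
  refine ⟨isFactorization_xc_iff hn, fun h => ?_⟩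
  rw [fc₁_eq_cons_fc₁Tail, fc₂_eq_fc₂Tail, fc₂Tail_of_lt (by omega)] at h
  simpa using congrArg List.length (List.cons.inj h).1
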